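/- Let G be a simple graph on [n] and i ∈ [n]. Then the initial ideal of the binomial edge ideal of the restriction G \ {i} together with x_i, y_i equals (in(J_{G\{i\}}), x_i, y_i) = (in(J_G), x_i, y_i); in particular, every minimal monomial generator of in(J_G) not divisible by x_i or y_i lies in in(J_{G\{i\}}). -/

import Mathlib

open MvPolynomial SimpleGraph Classical
open scoped BigOperators

noncomputable section BinomialEdgeIdeals

variable (K : Type*) [Field K]

/-- `f i j = x_i y_j - x_j y_i` in `S = K[x_v, y_v : v ∈ V]`, where
`x_v = X (Sum.inl v)` and `y_v = X (Sum.inr v)`. -/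
def fij {V : Type*} (i j : V) : MvPolynomial (V ⊕ V) K :=
  X (Sum.inl i) * X (Sum.inr j) - X (Sum.inl j) * X (Sum.inr i)

/-- The binomial edge ideal of a simple graph `G` on a linearly ordered vertex set. -/
def beIdeal {V : Type*} [LinearOrder V] (G : SimpleGraph V) :
    Ideal (MvPolynomial (V ⊕ V) K) :=
  Ideal.span { f | ∃ i j : V, i < j ∧ G.Adj i j ∧ f = fij K i j }

/-- Exponent vectors, compared lexicographically with
`x_1 > x_2 > ⋯ > x_n > y_1 > ⋯ > y_n`: the variable `x_i` is encoded as
`i - 1 ∈ Fin (n+n)` and `y_i` as `n + i - 1`, and a *smaller* code means a *bigger*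
variable, so the `Finsupp.Lex` order (which compares at the smallest differing index)
is exactly the lexicographic monomial order induced by this order of the variables. -/
def expLex {n : ℕ} (m : (Fin n ⊕ Fin n) →₀ ℕ) : Lex (Fin (n + n) →₀ ℕ) :=
  toLex (Finsupp.equivMapDomain finSumFinEquiv m)

/-- The leading exponent (largest exponent vector in the support, in the lexicographic
order `x_1 > ⋯ > x_n > y_1 > ⋯ > y_n`) of a polynomial; junk value `0` for `p = 0`. -/
def leadExp {n : ℕ} (p : MvPolynomial (Fin n ⊕ Fin n) K) : (Fin n ⊕ Fin n) →₀ ℕ :=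
  Finsupp.equivMapDomain finSumFinEquiv.symm
    (ofLex (WithBot.unbotD (toLex 0) (p.support.image (fun m => expLex m)).max))

/-- The initial ideal of `I` with respect to the lexicographic order induced by
`x_1 > ⋯ > x_n > y_1 > ⋯ > y_n`. -/
def initialIdeal {n : ℕ} (I : Ideal (MvPolynomial (Fin n ⊕ Fin n) K)) :
    Ideal (MvPolynomial (Fin n ⊕ Fin n) K) :=
  Ideal.span { q | ∃ p ∈ I, p ≠ 0 ∧ q = monomial (leadExp K p) (1 : K) }

/-- The graded maximal ideal, generated by all the variables. -/
def varIdeal (V : Type*) : Ideal (MvPolynomial (V ⊕ V) K) :=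
  Ideal.span (Set.range X)

/-- `depth (S/I)`: the supremum of the lengths of regular sequences on `S/I`
consisting of elements of the graded maximal ideal. -/
def quotDepth {V : Type*} (I : Ideal (MvPolynomial (V ⊕ V) K)) : ℕ :=
  sSup { k | ∃ rs : List (MvPolynomial (V ⊕ V) K), rs.length = k ∧
    (∀ r ∈ rs, r ∈ varIdeal K V) ∧
    RingTheory.Sequence.IsRegular (MvPolynomial (V ⊕ V) K ⧸ I) rs }

/-- `p` is homogeneous of degree `d ∈ ℤ` (the zero polynomial having every degree). -/
def IsHomogInt {σ : Type*} (p : MvPolynomial σ K) (d : ℤ) : Prop :=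
  p = 0 ∨ ∃ m : ℕ, (m : ℤ) = d ∧ p.IsHomogeneous m

/-- A graded free resolution of `S/I`: free modules `F i = ⊕_j S(-j)^{b i j}`
(with basis indexed by `Σ j : ℤ, Fin (b i j)`), degree-zero (i.e. twist-compatible
homogeneous) differentials, exact, augmented by a degree-zero surjection onto `S ⧸ I`. -/
structure GradedFreeResolution {σ : Type*} (I : Ideal (MvPolynomial σ K)) where
  b : ℕ → ℤ →₀ ℕ
  diff : ∀ i : ℕ, ((Σ j : ℤ, Fin (b (i + 1) j)) →₀ MvPolynomial σ K) →ₗ[MvPolynomial σ K]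
      ((Σ j : ℤ, Fin (b i j)) →₀ MvPolynomial σ K)
  aug : ((Σ j : ℤ, Fin (b 0 j)) →₀ MvPolynomial σ K) →ₗ[MvPolynomial σ K]
      (MvPolynomial σ K ⧸ I)
  homog : ∀ (i : ℕ) (j : ℤ) (k : Fin (b (i + 1) j)) (j' : ℤ) (k' : Fin (b i j')),
    IsHomogInt K ((diff i (Finsupp.single ⟨j, k⟩ 1)) ⟨j', k'⟩) (j - j')
  aug_homog : ∀ (j : ℤ) (k : Fin (b 0 j)), ∃ p : MvPolynomial σ K,
    IsHomogInt K p j ∧ aug (Finsupp.single ⟨j, k⟩ 1) = Ideal.Quotient.mk I p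
  aug_surj : Function.Surjective aug
  exact_zero : Function.Exact (diff 0) aug
  exact_succ : ∀ i : ℕ, Function.Exact (diff (i + 1)) (diff i)

/-- The Castelnuovo–Mumford regularity of `S/I`: the least `r` such that `S/I` admits a
graded free resolution with all `i`-th syzygies generated in degrees `≤ i + r` (the
minimal graded free resolution realizes this minimum). -/
def regQuot {σ : Type*} (I : Ideal (MvPolynomial σ K)) : ℤ :=
  sInf { r : ℤ | ∃ F : GradedFreeResolution K I, ∀ i j, F.b i j ≠ 0 → j ≤ i + r }

/- ### Graph-theoretic notions -/

/-- `s` is a maximal clique of `G`. -/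
def IsMaxClique {V : Type*} (G : SimpleGraph V) (s : Finset V) : Prop :=
  G.IsClique ↑s ∧ ∀ t : Finset V, G.IsClique ↑t → s ⊆ t → s = t

/-- A graph is chordal if it has no induced cycle of length `≥ 4`. -/
def Chordal {V : Type*} (G : SimpleGraph V) : Prop :=
  ∀ m : ℕ, 4 ≤ m → IsEmpty (cycleGraph m ↪g G)

/-- A block graph: a chordal graph in which any two distinct maximal cliques meet in at
most one vertex. -/
def IsBlockGraph {V : Type*} (G : SimpleGraph V) : Prop :=
  Chordal G ∧ ∀ s t : Finset V, IsMaxClique G s → IsMaxClique G t → s ≠ t →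
    (s ∩ t).card ≤ 1

/-- The conditions (i) and (ii) defining a `C_ℓ`-graph, for a given sequence of cliques
`F 0, …, F (ℓ-1)`: each `F i` is a maximal clique with at least `2` vertices, consecutive
cliques meet in exactly one vertex, non-consecutive cliques are disjoint, and every edge
of `G` either lies in some `F i` or is a pendant edge `{j, k}` attached at an
intersection point `j` of two consecutive cliques, with `k` of degree `1`. -/
def IsCliqueSeq {V : Type*} (G : SimpleGraph V) (ℓ : ℕ) (F : Fin ℓ → Finset V) : Prop :=
  (∀ i, IsMaxClique G (F i) ∧ 2 ≤ (F i).card) ∧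
  (∀ i : Fin ℓ, ∀ h : i.val + 1 < ℓ, (F i ∩ F ⟨i.val + 1, h⟩).card = 1) ∧
  (∀ i j : Fin ℓ, i < j → j.val ≠ i.val + 1 → F i ∩ F j = ∅) ∧
  (∀ e ∈ G.edgeSet, (∃ i, ∀ v ∈ e, v ∈ F i) ∨
    (∃ (jv kv : V) (i : Fin ℓ) (h : i.val + 1 < ℓ), e = s(jv, kv) ∧
      jv ∈ F i ∩ F ⟨i.val + 1, h⟩ ∧ (G.neighborSet kv).ncard = 1))

/-- A `C_ℓ`-graph. -/
def IsCLGraph {V : Type*} (G : SimpleGraph V) (ℓ : ℕ) : Prop :=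
  G.Connected ∧ ∃ F : Fin ℓ → Finset V, IsCliqueSeq G ℓ F

/-- `G` has an induced path of length `k` (an induced subgraph isomorphic to the path
graph with `k` edges). -/
def HasInducedPathLen {V : Type*} (G : SimpleGraph V) (k : ℕ) : Prop :=
  Nonempty (pathGraph (k + 1) ↪g G)

/-- The longest induced path of `G` has length `ℓ`. -/
def LongestInducedPathLen {V : Type*} (G : SimpleGraph V) (ℓ : ℕ) : Prop :=
  HasInducedPathLen G ℓ ∧ ∀ k, HasInducedPathLen G k → k ≤ ℓ

/-- The longest path of `G` has length `ℓ`. -/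
def LongestPathLen {V : Type*} (G : SimpleGraph V) (ℓ : ℕ) : Prop :=
  (∃ (u v : V) (p : G.Walk u v), p.IsPath ∧ p.length = ℓ) ∧
  ∀ (u v : V) (p : G.Walk u v), p.IsPath → p.length ≤ ℓ

/-- A caterpillar tree: a tree containing a path `P` such that every vertex is a vertex
of `P` or adjacent to a vertex of `P`. -/
def IsCaterpillar {V : Type*} (T : SimpleGraph V) : Prop :=
  T.IsTree ∧ ∃ (u v : V) (p : T.Walk u v), p.IsPath ∧
    ∀ w : V, w ∈ p.support ∨ ∃ z ∈ p.support, T.Adj w z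

/-- The spider tree on `ℓ + 3` vertices: a path `0 — 1 — ⋯ — ℓ` together with a path
`k — (ℓ+1) — (ℓ+2)` of length 2 attached at the vertex `k`. -/
def spider (ℓ k : ℕ) : SimpleGraph (Fin (ℓ + 3)) :=
  SimpleGraph.fromRel (fun a b =>
    (a.val + 1 = b.val ∧ b.val ≤ ℓ) ∨ (a.val = k ∧ b.val = ℓ + 1) ∨
    (a.val = ℓ + 1 ∧ b.val = ℓ + 2))

/-- The graph obtained from `G` by deleting the vertices in `T` (keeping the ambient
vertex set: the vertices of `T` simply become isolated). -/
def delVerts {V : Type*} (G : SimpleGraph V) (T : Set V) : SimpleGraph V where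
  Adj a b := G.Adj a b ∧ a ∉ T ∧ b ∉ T
  symm := ⟨fun a b h => ⟨h.1.symm, h.2.2, h.2.1⟩⟩
  loopless := ⟨fun a h => G.loopless.irrefl a h.1⟩

/-- The prime ideal `P_T(G)`: generated by `x_i, y_i` for `i ∈ T`, together with the
binomial edge ideals of the complete graphs on the connected components of the
restriction of `G` to the complement of `T`. -/
def cutPrime {V : Type*} [LinearOrder V] (G : SimpleGraph V) (T : Set V) :
    Ideal (MvPolynomial (V ⊕ V) K) :=
  Ideal.span ({ q | ∃ i ∈ T, q = X (Sum.inl i) ∨ q = X (Sum.inr i) } ∪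
    { q | ∃ i j : V, i < j ∧ i ∉ T ∧ j ∉ T ∧ (delVerts G T).Reachable i j ∧
      q = fij K i j })

/-- `c(T)`: the number of connected components of the restriction of `G` to the
complement of `T`. -/
def numComp {V : Type*} (G : SimpleGraph V) (T : Set V) : ℕ :=
  Nat.card ((G.induce Tᶜ).ConnectedComponent)

/-- `F 0, …, F (r-1)` is a leaf order on the maximal cliques of `G`: it enumerates them
without repetition, and each `F k` with `k > 0` is a leaf of the simplicial complex
generated by `F 0, …, F k`, i.e. admits a branch `F b`, `b < k`. -/
def IsLeafOrder {V : Type*} (G : SimpleGraph V) (r : ℕ) (F : Fin r → Finset V) : Prop :=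
  Function.Injective F ∧ (Set.range F = { s | IsMaxClique G s }) ∧
  ∀ k : Fin r, 0 < k.val → ∃ b : Fin r, b < k ∧
    ∀ m : Fin r, m < k → F m ∩ F k ⊆ F b ∩ F k

/-- An admissible path from `i` to `j` (`i < j`) in `G`: a path (recorded as its list of
vertices) with pairwise distinct vertices, whose interior vertices `v` all satisfy
`v < i` or `v > j`, and which is minimal: no proper subsequence with the same endpoints
is again a path of `G`. -/
def IsAdmissiblePath {n : ℕ} (G : SimpleGraph (Fin n)) (i j : Fin n)
    (π : List (Fin n)) : Prop :=
  i < j ∧ π.Chain' G.Adj ∧ π.head? = some i ∧ π.getLast? = some j ∧ π.Nodup ∧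
  (∀ v ∈ π, v ≠ i → v ≠ j → (v < i ∨ j < v)) ∧
  ∀ π' : List (Fin n), π' ≠ π → π'.Sublist π → π'.head? = some i →
    π'.getLast? = some j → ¬ π'.Chain' G.Adj

/-- `u_π = (∏_{v ∈ π, v > j} x_v) (∏_{v ∈ π, v < i} y_v)` for a path `π` from `i` to `j`. -/
def uPath {n : ℕ} (i j : Fin n) (π : List (Fin n)) : MvPolynomial (Fin n ⊕ Fin n) K :=
  ((π.filter (fun v => j < v)).map (fun v => X (Sum.inl v))).prod *
  ((π.filter (fun v => v < i)).map (fun v => X (Sum.inr v))).prod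

/-- `Γ` is the reduced Gröbner basis of `I` with respect to the lexicographic order
`x_1 > ⋯ > x_n > y_1 > ⋯ > y_n`: `Γ ⊆ I`, all elements are monic, the leading monomials
of `Γ` generate the initial ideal of `I`, and no monomial of an element of `Γ` is
divisible by the leading monomial of another element. -/
def IsReducedGB {n : ℕ} (Γ : Set (MvPolynomial (Fin n ⊕ Fin n) K))
    (I : Ideal (MvPolynomial (Fin n ⊕ Fin n) K)) : Prop :=
  Γ ⊆ (I : Set (MvPolynomial (Fin n ⊕ Fin n) K)) ∧
  (∀ g ∈ Γ, g ≠ 0 ∧ MvPolynomial.coeff (leadExp K g) g = 1) ∧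
  initialIdeal K I = Ideal.span ((fun g => (monomial (leadExp K g) (1 : K))) '' Γ) ∧
  ∀ g ∈ Γ, ∀ g' ∈ Γ, g' ≠ g → ∀ m ∈ g.support, ¬ leadExp K g' ≤ m

end BinomialEdgeIdeals

/-! Killing the variables `x_i, y_i` (the substitution `x_i, y_i ↦ 0`) fixes the generators of
`J_{G∖i}` and kills `(x_i, y_i)`. So for `p ∈ J_{G∖i} + (x_i, y_i)` whose leading monomial is
not divisible by `x_i` or `y_i`, the substituted polynomial lies in `J_{G∖i}`, has its support
inside that of `p` and still contains the leading monomial of `p`: the leading monomials agree.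
Since `J_{G∖i} ⊆ J_G ⊆ J_{G∖i} + (x_i, y_i)`, all three ideals coincide modulo `(x_i, y_i)`.
The substitution also maps the monomial ideal `in(J_{G∖i})` into itself and fixes the monomials
avoiding `x_i, y_i`, which gives the statement on generators. -/

open MvPolynomial

section KillVars

variable {σ R : Type*} [CommSemiring R]

noncomputable def killVars (s : Set σ) : MvPolynomial σ R →ₐ[R] MvPolynomial σ R :=
  aeval fun v => if v ∈ s then 0 else X v

theorem killVars_monomial (s : Set σ) (m : σ →₀ ℕ) (c : R) :
    killVars s (monomial m c) = if ∀ v ∈ s, m v = 0 then monomial m c else 0 := by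
  rw [killVars, aeval_monomial]
  split_ifs with h
  · rw [monomial_eq, algebraMap_eq]
    congr 1
    refine Finsupp.prod_congr fun v hv => ?_
    rw [if_neg fun hvs => Finsupp.mem_support_iff.mp hv (h v hvs)]
  · push Not at h
    obtain ⟨v, hvs, hv⟩ := h
    rw [Finsupp.prod, Finset.prod_eq_zero (Finsupp.mem_support_iff.mpr hv) (by simp [hvs, hv]),
      mul_zero]

theorem coeff_killVars (s : Set σ) (p : MvPolynomial σ R) (m : σ →₀ ℕ) :
    coeff m (killVars s p) = if ∀ v ∈ s, m v = 0 then coeff m p else 0 := by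
  induction p using MvPolynomial.induction_on' with
  | monomial u c =>
    rw [killVars_monomial]
    by_cases hu : u = m
    · subst hu; split_ifs <;> simp
    · split_ifs <;> simp [coeff_monomial, hu]
  | add p q hp hq => rw [map_add, coeff_add, coeff_add, hp, hq]; split_ifs <;> simp

theorem support_killVars_subset (s : Set σ) (p : MvPolynomial σ R) :
    (killVars s p).support ⊆ p.support := by
  intro m hm
  rw [mem_support_iff, coeff_killVars] at hm
  split_ifs at hm
  exacts [mem_support_iff.mpr hm, absurd rfl hm]

theorem killVars_mem_span {s : Set σ} {t : Set (MvPolynomial σ R)}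
    (ht : ∀ g ∈ t, killVars s g ∈ Ideal.span t) {p : MvPolynomial σ R}
    (hp : p ∈ Ideal.span t) : killVars s p ∈ Ideal.span t := by
  have hmap := Ideal.mem_map_of_mem (killVars s) hp
  rw [Ideal.map_span] at hmap
  refine Ideal.span_le.mpr ?_ hmap
  rintro _ ⟨g, hg, rfl⟩
  exact ht g hg

theorem killVars_eq_zero_of_mem_span_X {s : Set σ} {p : MvPolynomial σ R}
    (hp : p ∈ Ideal.span (X '' s)) : killVars s p = 0 := by
  suffices Ideal.span (X '' s) ≤ RingHom.ker (killVars s (R := R)) from this hp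
  refine Ideal.span_le.mpr ?_
  rintro _ ⟨v, hv, rfl⟩
  simp [killVars, hv]

theorem killVars_mem_of_mem_sup_span_X {s : Set σ} {I : Ideal (MvPolynomial σ R)}
    (hI : ∀ p ∈ I, killVars s p ∈ I) {p : MvPolynomial σ R}
    (hp : p ∈ I ⊔ Ideal.span (X '' s)) : killVars s p ∈ I := by
  obtain ⟨a, ha, b, hb, rfl⟩ := Submodule.mem_sup.mp hp
  rw [map_add, killVars_eq_zero_of_mem_span_X hb, add_zero]
  exact hI a ha

theorem monomial_mem_span_X {s : Set σ} {m : σ →₀ ℕ} {v : σ} (hv : v ∈ s) (hm : m v ≠ 0)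
    (c : R) : monomial m c ∈ Ideal.span (X '' s) := by
  have hle : Finsupp.single v 1 ≤ m := Finsupp.single_le_iff.mpr (Nat.one_le_iff_ne_zero.mpr hm)
  have heq : monomial m c = monomial (m - Finsupp.single v 1) c * X v := by
    rw [X, monomial_mul, mul_one, tsub_add_cancel_of_le hle]
  rw [heq]
  exact Ideal.mul_mem_left _ _ (Ideal.subset_span ⟨v, hv, rfl⟩)

end KillVars

section InitialIdeal

variable {K : Type*} [Field K] {n : ℕ}

theorem expLex_injective : Function.Injective (expLex (n := n)) := fun _ _ h =>
  (Finsupp.equivCongrLeft finSumFinEquiv).injective (toLex.injective h)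

theorem leadExp_spec {p : MvPolynomial (Fin n ⊕ Fin n) K} (hp : p ≠ 0) :
    leadExp K p ∈ p.support ∧ ∀ m ∈ p.support, expLex m ≤ expLex (leadExp K p) := by
  have hne : (p.support.image expLex).Nonempty := (support_nonempty.mpr hp).image _
  obtain ⟨m₀, hm₀, hmax⟩ := Finset.mem_image.mp (Finset.max'_mem _ hne)
  have hlead : leadExp K p = m₀ := by
    rw [leadExp, ← Finset.coe_max' hne, WithBot.unbotD_coe, ← hmax]
    ext a; simp [expLex]
  subst hlead
  exact ⟨hm₀, fun m hm => hmax ▸ Finset.le_max' _ _ (Finset.mem_image_of_mem expLex hm)⟩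

theorem leadExp_eq_of_support_subset {p q : MvPolynomial (Fin n ⊕ Fin n) K}
    (hsub : q.support ⊆ p.support) (hmem : leadExp K p ∈ q.support) :
    leadExp K q = leadExp K p := by
  have hq : q ≠ 0 := by rintro rfl; simp at hmem
  have hp : p ≠ 0 := by rintro rfl; simpa using hsub hmem
  exact expLex_injective (le_antisymm ((leadExp_spec hp).2 _ (hsub (leadExp_spec hq).1))
    ((leadExp_spec hq).2 _ hmem))

theorem leadExp_X (v : Fin n ⊕ Fin n) :
    leadExp K (X v : MvPolynomial (Fin n ⊕ Fin n) K) = Finsupp.single v 1 := by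
  simpa only [support_X, Finset.mem_singleton] using (leadExp_spec (X_ne_zero (R := K) v)).1

theorem monomial_leadExp_mem_initialIdeal {I : Ideal (MvPolynomial (Fin n ⊕ Fin n) K)}
    {p : MvPolynomial (Fin n ⊕ Fin n) K} (hp : p ∈ I) (hp0 : p ≠ 0) :
    monomial (leadExp K p) 1 ∈ initialIdeal K I :=
  Ideal.subset_span ⟨p, hp, hp0, rfl⟩

theorem initialIdeal_mono {I J : Ideal (MvPolynomial (Fin n ⊕ Fin n) K)} (h : I ≤ J) :
    initialIdeal K I ≤ initialIdeal K J :=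
  Ideal.span_le.mpr fun _ ⟨_, hp, hp0, he⟩ => he ▸ monomial_leadExp_mem_initialIdeal (h hp) hp0

theorem span_X_le_initialIdeal {s : Set (Fin n ⊕ Fin n)}
    {I : Ideal (MvPolynomial (Fin n ⊕ Fin n) K)} (h : Ideal.span (X '' s) ≤ I) :
    Ideal.span (X '' s) ≤ initialIdeal K I := by
  refine Ideal.span_le.mpr ?_
  rintro _ ⟨v, hv, rfl⟩
  have := monomial_leadExp_mem_initialIdeal (h (Ideal.subset_span ⟨v, hv, rfl⟩)) (X_ne_zero v)
  rwa [leadExp_X] at this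

theorem killVars_mem_initialIdeal (s : Set (Fin n ⊕ Fin n))
    (I : Ideal (MvPolynomial (Fin n ⊕ Fin n) K)) :
    ∀ p ∈ initialIdeal K I, killVars s p ∈ initialIdeal K I := by
  refine fun p hp => killVars_mem_span ?_ hp
  rintro _ ⟨q, hq, hq0, rfl⟩
  rw [killVars_monomial]
  split_ifs
  · exact Ideal.subset_span ⟨q, hq, hq0, rfl⟩
  · exact Ideal.zero_mem _

variable {s : Set (Fin n ⊕ Fin n)} {I : Ideal (MvPolynomial (Fin n ⊕ Fin n) K)}

theorem monomial_leadExp_mem_initialIdeal_sup_span_X (hI : ∀ p ∈ I, killVars s p ∈ I)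
    {p : MvPolynomial (Fin n ⊕ Fin n) K} (hp : p ∈ I ⊔ Ideal.span (X '' s)) (hp0 : p ≠ 0) :
    monomial (leadExp K p) 1 ∈ initialIdeal K I ⊔ Ideal.span (X '' s) := by
  by_cases hlead : ∀ v ∈ s, leadExp K p v = 0
  · have hmem : leadExp K p ∈ (killVars s p).support := by
      rw [mem_support_iff, coeff_killVars, if_pos hlead]
      exact mem_support_iff.mp (leadExp_spec hp0).1
    have heq := leadExp_eq_of_support_subset (support_killVars_subset s p) hmem
    refine Submodule.mem_sup_left (heq ▸ monomial_leadExp_mem_initialIdeal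
      (killVars_mem_of_mem_sup_span_X hI hp) ?_)
    rintro h
    simp [h] at hmem
  · push Not at hlead
    obtain ⟨v, hv, hv0⟩ := hlead
    exact Submodule.mem_sup_right (monomial_mem_span_X hv hv0 1)

theorem initialIdeal_sup_span_X (hI : ∀ p ∈ I, killVars s p ∈ I) :
    initialIdeal K (I ⊔ Ideal.span (X '' s)) = initialIdeal K I ⊔ Ideal.span (X '' s) := by
  refine le_antisymm (Ideal.span_le.mpr ?_) (sup_le (initialIdeal_mono le_sup_left)
    (span_X_le_initialIdeal le_sup_right))
  rintro _ ⟨p, hp, hp0, rfl⟩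
  exact monomial_leadExp_mem_initialIdeal_sup_span_X hI hp hp0

theorem monomial_mem_initialIdeal_of_mem_sup_span_X {m : (Fin n ⊕ Fin n) →₀ ℕ}
    (hm : monomial m (1 : K) ∈ initialIdeal K I ⊔ Ideal.span (X '' s))
    (hms : ∀ v ∈ s, m v = 0) : monomial m (1 : K) ∈ initialIdeal K I := by
  have := killVars_mem_of_mem_sup_span_X (killVars_mem_initialIdeal s I) hm
  rwa [killVars_monomial, if_pos hms] at this

end InitialIdeal

section BinomialEdgeIdeal

variable (K : Type*) [Field K] {V : Type*}

def vertexVars (T : Set V) : Set (V ⊕ V) :=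
  Sum.inl '' T ∪ Sum.inr '' T

theorem delVerts_le (G : SimpleGraph V) (T : Set V) : delVerts G T ≤ G :=
  fun _ _ h => h.1

theorem killVars_fij {T : Set V} {k l : V} (hk : k ∉ T) (hl : l ∉ T) :
    killVars (vertexVars T) (fij K k l) = fij K k l := by
  simp [fij, killVars, vertexVars, hk, hl]

theorem fij_mem_span_X {T : Set V} {k l : V} (h : k ∈ T ∨ l ∈ T) :
    fij K k l ∈ Ideal.span (X '' vertexVars T) := by
  have hX : ∀ {w}, w ∈ T → ∀ {a : V ⊕ V}, a = Sum.inl w ∨ a = Sum.inr w →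
      (X a : MvPolynomial (V ⊕ V) K) ∈ Ideal.span (X '' vertexVars T) := by
    rintro w hw a (rfl | rfl) <;> exact Ideal.subset_span ⟨_, by simp [vertexVars, hw], rfl⟩
  rcases h with h | h
  · exact Ideal.sub_mem _ (Ideal.mul_mem_right _ _ (hX h (.inl rfl)))
      (Ideal.mul_mem_left _ _ (hX h (.inr rfl)))
  · exact Ideal.sub_mem _ (Ideal.mul_mem_left _ _ (hX h (.inr rfl)))
      (Ideal.mul_mem_right _ _ (hX h (.inl rfl)))

variable [LinearOrder V]

theorem beIdeal_mono {G H : SimpleGraph V} (h : G ≤ H) : beIdeal K G ≤ beIdeal K H :=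
  Ideal.span_mono fun _ ⟨k, l, hkl, hadj, he⟩ => ⟨k, l, hkl, h hadj, he⟩

theorem killVars_mem_beIdeal_delVerts (G : SimpleGraph V) (T : Set V) :
    ∀ p ∈ beIdeal K (delVerts G T), killVars (vertexVars T) p ∈ beIdeal K (delVerts G T) := by
  refine fun p hp => killVars_mem_span ?_ hp
  rintro _ ⟨k, l, hkl, hadj, rfl⟩
  rw [killVars_fij K hadj.2.1 hadj.2.2]
  exact Ideal.subset_span ⟨k, l, hkl, hadj, rfl⟩

theorem beIdeal_le_beIdeal_delVerts_sup (G : SimpleGraph V) (T : Set V) :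
    beIdeal K G ≤ beIdeal K (delVerts G T) ⊔ Ideal.span (X '' vertexVars T) := by
  refine Ideal.span_le.mpr ?_
  rintro _ ⟨k, l, hkl, hadj, rfl⟩
  by_cases h : k ∈ T ∨ l ∈ T
  · exact Submodule.mem_sup_right (fij_mem_span_X K h)
  · push Not at h
    exact Submodule.mem_sup_left (Ideal.subset_span ⟨k, l, hkl, ⟨hadj, h.1, h.2⟩, rfl⟩)

end BinomialEdgeIdeal

/-- `in(J_{G∖i}, x_i, y_i) = (in(J_{G∖i}), x_i, y_i) = (in(J_G), x_i, y_i)`;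
in particular every minimal monomial generator of `in(J_G)` not divisible by `x_i` or
`y_i` lies in `in(J_{G∖i})`. -/
theorem stmt1 (K : Type*) [Field K] (n : ℕ) (G : SimpleGraph (Fin n)) (i : Fin n) :
    (initialIdeal K (beIdeal K (delVerts G {i}) +
        Ideal.span {X (Sum.inl i), X (Sum.inr i)}) =
      initialIdeal K (beIdeal K (delVerts G {i})) +
        Ideal.span {X (Sum.inl i), X (Sum.inr i)}) ∧
    (initialIdeal K (beIdeal K (delVerts G {i})) +
        Ideal.span {X (Sum.inl i), X (Sum.inr i)} =
      initialIdeal K (beIdeal K G) + Ideal.span {X (Sum.inl i), X (Sum.inr i)}) ∧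
    (∀ m : (Fin n ⊕ Fin n) →₀ ℕ,
      (monomial m (1 : K)) ∈ initialIdeal K (beIdeal K G) →
      (∀ m' : (Fin n ⊕ Fin n) →₀ ℕ, m' ≤ m → m' ≠ m →
        (monomial m' (1 : K)) ∉ initialIdeal K (beIdeal K G)) →
      m (Sum.inl i) = 0 → m (Sum.inr i) = 0 →
      (monomial m (1 : K)) ∈ initialIdeal K (beIdeal K (delVerts G {i}))) := by
  have hT : Ideal.span {X (Sum.inl i), X (Sum.inr i)} =
      Ideal.span (X '' vertexVars {i} : Set (MvPolynomial (Fin n ⊕ Fin n) K)) := by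
    rw [vertexVars, Set.image_singleton, Set.image_singleton, Set.singleton_union, Set.image_pair]
  simp only [hT, Submodule.add_eq_sup]
  set T := Ideal.span (X '' vertexVars {i} : Set (MvPolynomial (Fin n ⊕ Fin n) K))
  have hsplit : initialIdeal K (beIdeal K (delVerts G {i}) ⊔ T) =
      initialIdeal K (beIdeal K (delVerts G {i})) ⊔ T :=
    initialIdeal_sup_span_X (killVars_mem_beIdeal_delVerts K G {i})
  have hquot : initialIdeal K (beIdeal K (delVerts G {i})) ⊔ T =
      initialIdeal K (beIdeal K G) ⊔ T := by
    refine le_antisymm (sup_le_sup_right (initialIdeal_mono (beIdeal_mono K (delVerts_le G _))) _)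
      (sup_le ?_ le_sup_right)
    rw [← hsplit]
    exact initialIdeal_mono (beIdeal_le_beIdeal_delVerts_sup K G {i})
  refine ⟨hsplit, hquot, fun m hm _ hxi hyi => ?_⟩
  refine monomial_mem_initialIdeal_of_mem_sup_span_X (s := vertexVars {i}) ?_ ?_
  · rw [hquot]
    exact Submodule.mem_sup_left hm
  · simp [vertexVars, hxi, hyi]
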